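/- Let κ < 1, and set λ = √(1−κ), c = μ/2 − 1, k = 1 in the Lie algebra [E1,E2]=2kξ, [E2,ξ]=−(λ+c)E1, [ξ,E1]=(λ−c)E2 with orthonormal frame (ξ,E1,E2). Then the principal Ricci curvatures are Ric(ξ,ξ)=2κ, Ric(E1,E1)=−μ(1−√(1−κ)), Ric(E2,E2)=−μ(1+√(1−κ)), and the scalar curvature equals 2(κ−μ). -/

import Mathlib

/-!
Testing the Koszul formula against the orthonormal frame `(ξ, E1, E2)` determines the connection
`∇` uniquely: it is bilinear with explicit coefficients in `k, λ, c`. Substituting into the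
curvature gives Milnor's formulas for a unimodular three-dimensional Lie algebra, and for
`k = 1` the relations `λ² = 1 - κ`, `2(1 + c) = μ` turn them into the stated values.
-/

noncomputable section

def ξ : Fin 3 → ℝ := ![1, 0, 0]
def E1 : Fin 3 → ℝ := ![0, 1, 0]
def E2 : Fin 3 → ℝ := ![0, 0, 1]

/-- Inner product making (ξ, E1, E2) orthonormal. -/
def ip (x y : Fin 3 → ℝ) : ℝ := x 0 * y 0 + x 1 * y 1 + x 2 * y 2

/-- Bracket [E1,E2] = 2k ξ, [E2,ξ] = −(λ+c) E1, [ξ,E1] = (λ−c) E2. -/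
def br (k lam c : ℝ) (x y : Fin 3 → ℝ) : Fin 3 → ℝ :=
  ![2 * k * (x 1 * y 2 - x 2 * y 1),
    (lam + c) * (x 0 * y 2 - x 2 * y 0),
    (lam - c) * (x 0 * y 1 - x 1 * y 0)]

def leviCivita (k lam c : ℝ) (X Y : Fin 3 → ℝ) : Fin 3 → ℝ :=
  ![(k + lam) * X 1 * Y 2 + (lam - k) * X 2 * Y 1,
    (k + c) * X 0 * Y 2 + (k - lam) * X 2 * Y 0,
    -(k + c) * X 0 * Y 1 - (k + lam) * X 1 * Y 0]

def curvature (k lam c : ℝ) (X Y Z : Fin 3 → ℝ) : Fin 3 → ℝ :=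
  leviCivita k lam c X (leviCivita k lam c Y Z) - leviCivita k lam c Y (leviCivita k lam c X Z) -
    leviCivita k lam c (br k lam c X Y) Z

def ricci (k lam c : ℝ) (X : Fin 3 → ℝ) : ℝ :=
  ip (curvature k lam c ξ X X) ξ + ip (curvature k lam c E1 X X) E1 +
    ip (curvature k lam c E2 X X) E2

@[simp] lemma ip_ξ (v : Fin 3 → ℝ) : ip v ξ = v 0 := by simp [ip, ξ]

@[simp] lemma ip_E1 (v : Fin 3 → ℝ) : ip v E1 = v 1 := by simp [ip, E1]

@[simp] lemma ip_E2 (v : Fin 3 → ℝ) : ip v E2 = v 2 := by simp [ip, E2]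

lemma eq_leviCivita_of_koszul {k lam c : ℝ} {nabla : (Fin 3 → ℝ) → (Fin 3 → ℝ) → (Fin 3 → ℝ)}
    (hK : ∀ X Y Z, 2 * ip (nabla X Y) Z =
      ip (br k lam c X Y) Z - ip (br k lam c Y Z) X + ip (br k lam c Z X) Y) :
    nabla = leviCivita k lam c := by
  funext X Y i
  have h0 := hK X Y ξ
  have h1 := hK X Y E1
  have h2 := hK X Y E2
  simp only [ip, br, ξ, E1, E2, Matrix.cons_val_zero, Matrix.cons_val_one, Matrix.cons_val_two,
    Matrix.head_cons, Matrix.tail_cons] at h0 h1 h2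
  fin_cases i <;>
  · simp only [leviCivita, Fin.zero_eta, Fin.mk_one, Fin.reduceFinMk, Matrix.cons_val_zero,
      Matrix.cons_val_one, Matrix.cons_val_two, Matrix.head_cons, Matrix.tail_cons]
    linarith

section Milnor

/- Milnor's formula `Ric(eᵢ) = 2 μⱼ μₗ`, with `μ = (-(k + c), k + λ, k - λ)` for the structure
constants `(2k, -(λ + c), λ - c)` of `br k lam c`. -/

variable (k lam c : ℝ)

lemma ricci_ξ : ricci k lam c ξ = 2 * (k + lam) * (k - lam) := by
  simp only [ricci, ip_ξ, ip_E1, ip_E2]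
  simp only [curvature, leviCivita, br, ξ, E1, E2, Pi.sub_apply, Matrix.cons_val_zero,
    Matrix.cons_val_one, Matrix.cons_val_two, Matrix.head_cons, Matrix.tail_cons]
  ring

lemma ricci_E1 : ricci k lam c E1 = -2 * (k + c) * (k - lam) := by
  simp only [ricci, ip_ξ, ip_E1, ip_E2]
  simp only [curvature, leviCivita, br, ξ, E1, E2, Pi.sub_apply, Matrix.cons_val_zero,
    Matrix.cons_val_one, Matrix.cons_val_two, Matrix.head_cons, Matrix.tail_cons]
  ring

lemma ricci_E2 : ricci k lam c E2 = -2 * (k + c) * (k + lam) := by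
  simp only [ricci, ip_ξ, ip_E1, ip_E2]
  simp only [curvature, leviCivita, br, ξ, E1, E2, Pi.sub_apply, Matrix.cons_val_zero,
    Matrix.cons_val_one, Matrix.cons_val_two, Matrix.head_cons, Matrix.tail_cons]
  ring

end Milnor

/-- Contact metric case k = 1, λ = √(1−κ), c = μ/2 − 1, κ < 1: the principal Ricci
curvatures are 2κ, −μ(1−√(1−κ)), −μ(1+√(1−κ)) and the scalar curvature is 2(κ−μ). -/
theorem ricci_contact_metric_case (κ μ : ℝ) (hκ : κ < 1)
    (lam c : ℝ) (hlam : lam = Real.sqrt (1 - κ)) (hc : c = μ / 2 - 1)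
    (nabla : (Fin 3 → ℝ) → (Fin 3 → ℝ) → (Fin 3 → ℝ))
    (hK : ∀ X Y Z, 2 * ip (nabla X Y) Z =
      ip (br 1 lam c X Y) Z - ip (br 1 lam c Y Z) X + ip (br 1 lam c Z X) Y)
    (R : (Fin 3 → ℝ) → (Fin 3 → ℝ) → (Fin 3 → ℝ) → (Fin 3 → ℝ))
    (hR : ∀ X Y Z, R X Y Z =
      nabla X (nabla Y Z) - nabla Y (nabla X Z) - nabla (br 1 lam c X Y) Z)
    (Ric : (Fin 3 → ℝ) → ℝ)
    (hRic : ∀ X, Ric X = ip (R ξ X X) ξ + ip (R E1 X X) E1 + ip (R E2 X X) E2) :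
    Ric ξ = 2 * κ ∧
    Ric E1 = -μ * (1 - Real.sqrt (1 - κ)) ∧
    Ric E2 = -μ * (1 + Real.sqrt (1 - κ)) ∧
    Ric ξ + Ric E1 + Ric E2 = 2 * (κ - μ) := by
  obtain rfl := eq_leviCivita_of_koszul hK
  obtain rfl : Ric = ricci 1 lam c := funext fun X => by simp only [hRic, hR, ricci, curvature]
  have hlam_sq : lam ^ 2 = 1 - κ := hlam ▸ Real.sq_sqrt (by linarith)
  subst hc
  rw [← hlam, ricci_ξ, ricci_E1, ricci_E2]
  refine ⟨by linear_combination (-2) * hlam_sq, by ring, by ring,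
    by linear_combination (-2) * hlam_sq⟩
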